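/- arXiv:1912.11104 — 2 statements merged into one kernel-verified Lean document; each statement's English description precedes it below -/
import Mathlib

section
/- The number of faces of a double tadpole decorated with melonic 2-point functions, with b bubbles in total, equals (3/2)(b-1) + 4; in particular b is odd. -/
/-!  A combinatorial model of the Feynman graphs of the rank-3 tetrahedral
(`O(N)^3`) tensor model.

A graph consists of a finite set `B` of bubbles (copies of the tetrahedron
`K_4`); each bubble has four vertices, so the vertex set is `B × Fin 4`.
Inside every bubble the edges of colors `1,2,3` are given once and for all by
the three fixed-point-free involutions of `Fin 4` (the proper 3-edge-coloring
of `K_4`).  The color-0 propagator edges, one per vertex, are encoded by a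
fixed-point-free involution `pairing` of the vertex set. -/

open Equiv

/-- The color-`c` (for `c ∈ {1,2,3}`, here `c : Fin 3`) perfect matching on the
four vertices of a tetrahedral bubble. -/
def bubblePerm : Fin 3 → Equiv.Perm (Fin 4) :=
  ![Equiv.swap 0 1 * Equiv.swap 2 3,
    Equiv.swap 0 2 * Equiv.swap 1 3,
    Equiv.swap 0 3 * Equiv.swap 1 2]

/-- A Feynman graph of the tetrahedral tensor model: a finite set of `K_4`
bubbles together with a fixed-point-free involution of the vertex set
describing the color-0 edges. -/
structure TGraph where
  B : Type
  [fintypeB : Fintype B]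
  [decB : DecidableEq B]
  pairing : Equiv.Perm (B × Fin 4)
  invol : ∀ v, pairing (pairing v) = v
  fixfree : ∀ v, pairing v ≠ v

attribute [instance] TGraph.fintypeB TGraph.decB

namespace TGraph

/-- The vertex set of a graph. -/
abbrev V (G : TGraph) : Type := G.B × Fin 4

/-- The permutation of the vertices given by the color-`c` edges inside the
bubbles. -/
def colPerm (G : TGraph) (c : Fin 3) : Equiv.Perm G.V :=
  (Equiv.refl G.B).prodCongr (bubblePerm c)

/-- The number of bubbles of a graph. -/
def b (G : TGraph) : ℕ := Fintype.card G.B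

/-- The subgroup of permutations of the vertices generated by the color-0
pairing and the color-`c` matching: its orbits are exactly the faces of
color `c` (cycles alternating colors `0` and `c`). -/
def faceGroup (G : TGraph) (c : Fin 3) : Subgroup (Equiv.Perm G.V) :=
  Subgroup.closure {G.pairing, G.colPerm c}

/-- Two vertices lie on the same face of color `c`. -/
def sameFace (G : TGraph) (c : Fin 3) (u v : G.V) : Prop :=
  u ∈ MulAction.orbit (G.faceGroup c) v

/-- The number of faces of color `c` of the graph. -/
noncomputable def numFaces (G : TGraph) (c : Fin 3) : ℕ :=
  Nat.card (MulAction.orbitRel.Quotient (G.faceGroup c) G.V)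

/-- The total number of faces of the graph. -/
noncomputable def F (G : TGraph) : ℕ := ∑ c : Fin 3, G.numFaces c

/-- The length of the face of color `c` through the vertex `v` (a face of
length `n` consists of `n` color-0 edges and `n` color-`c` edges, hence `2n`
vertices). -/
noncomputable def faceLength (G : TGraph) (c : Fin 3) (v : G.V) : ℕ :=
  Nat.card (MulAction.orbit (G.faceGroup c) v) / 2

/-- The subgroup generated by all edges of the graph. -/
def fullGroup (G : TGraph) : Subgroup (Equiv.Perm G.V) :=
  Subgroup.closure ({G.pairing} ∪ Set.range G.colPerm)

/-- A graph is connected if any vertex can be reached from any other one along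
its edges. -/
def Connected (G : TGraph) : Prop :=
  ∀ u v : G.V, u ∈ MulAction.orbit G.fullGroup v

/-- One step along an edge of the graph avoiding the color-0 edges whose
endpoints belong to `S`. -/
def stepAvoiding (G : TGraph) (S : Set G.V) (u v : G.V) : Prop :=
  (∃ c, v = G.colPerm c u) ∨ (v = G.pairing u ∧ u ∉ S ∧ v ∉ S)

/-- Reachability in the graph with the color-0 edges meeting `S` removed. -/
def reachAvoiding (G : TGraph) (S : Set G.V) : G.V → G.V → Prop :=
  Relation.ReflTransGen (G.stepAvoiding S)

/-- The pair of color-0 edges through the vertices `u` and `w` disconnects the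
graph when removed.  Together with the requirement that the two edges be
distinct, this is the notion of a 2-edge-cut of color-0 edges. -/
def CutDisconnects (G : TGraph) (u w : G.V) : Prop :=
  ¬ ∀ x y : G.V, G.reachAvoiding {u, G.pairing u, w, G.pairing w} x y

/-- Two vertices are connected by a 2-point function if they are joined by a
color-0 edge, or if their two (distinct) color-0 edges form a 2-edge-cut. -/
def TwoPoint (G : TGraph) (x y : G.V) : Prop :=
  G.pairing x = y ∨ (y ≠ x ∧ y ≠ G.pairing x ∧ G.CutDisconnects x y)

/-- The flip of the two color-0 edges `{u, pairing u}` and `{w, pairing w}`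
(assumed distinct) which reconnects `u` with `w` (and `pairing u` with
`pairing w`): the pairing is conjugated by the transposition exchanging
`pairing u` and `w`.  The other flip of this pair of edges is
`G.flip u (G.pairing w)`. -/
def flip (G : TGraph) (u w : G.V) : TGraph where
  B := G.B
  pairing := Equiv.swap (G.pairing u) w * G.pairing * Equiv.swap (G.pairing u) w
  invol := by
    intro v
    simp only [Equiv.Perm.mul_apply, Equiv.swap_apply_self, G.invol]
  fixfree := by
    intro v h
    simp only [Equiv.Perm.mul_apply] at h
    have h' : G.pairing (Equiv.swap (G.pairing u) w v) = Equiv.swap (G.pairing u) w v := by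
      have := congrArg (Equiv.swap (G.pairing u) w) h
      simpa using this
    exact G.fixfree _ h'

/-- The face of color `c` through the color-0 edge `{v, pairing v}` has
length 2 (it consists of this edge, a color-`c` edge, a second color-0 edge
and a second color-`c` edge closing the cycle). -/
def FaceLen2 (G : TGraph) (c : Fin 3) (v : G.V) : Prop :=
  G.pairing v ≠ G.colPerm c v ∧
    G.pairing (G.colPerm c (G.pairing v)) = G.colPerm c v

/-- A proper face of length 2 of color `c` through `v`: a face of length 2
whose two color-0 edges connect two distinct bubbles. -/
def ProperFace2 (G : TGraph) (c : Fin 3) (v : G.V) : Prop :=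
  G.FaceLen2 c v ∧ (G.pairing v).1 ≠ v.1

/-- A graph maximizes the number of faces if it is connected and no connected
graph with the same number of bubbles has more faces. -/
def MaximizesFaces (G : TGraph) : Prop :=
  G.Connected ∧ ∀ H : TGraph, H.Connected → H.b = G.b → H.F ≤ G.F

/-- Isomorphisms of graphs: bijections of the vertex sets commuting with the
color-0 pairing and with the colored matchings inside the bubbles. -/
structure Iso (G H : TGraph) where
  toEquiv : G.V ≃ H.V
  map_pairing : ∀ v, toEquiv (G.pairing v) = H.pairing (toEquiv v)
  map_col : ∀ c v, toEquiv (G.colPerm c v) = H.colPerm c (toEquiv v)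

/-- Two graphs are isomorphic. -/
def IsIso (G H : TGraph) : Prop := Nonempty (Iso G H)

end TGraph

open TGraph

/-- The leading-order two-bubble graph `G_2`: two tetrahedral bubbles with
corresponding vertices joined by four color-0 edges, so that all six faces
have length 2. -/
def G2 : TGraph where
  B := Fin 2
  pairing := (Equiv.swap (0 : Fin 2) 1).prodCongr (Equiv.refl (Fin 4))
  invol := by
    rintro ⟨i, k⟩
    simp [Equiv.prodCongr_apply, Equiv.swap_apply_self]
  fixfree := by
    rintro ⟨i, k⟩ h
    have hi : Equiv.swap (0 : Fin 2) 1 i = i := congrArg Prod.fst h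
    fin_cases i <;> simp_all

/-- The double tadpole `G_1^{(c)}`: one tetrahedral bubble whose two color-0
edges each join two vertices already adjacent by an edge of color `c`. -/
def G1 (c : Fin 3) : TGraph where
  B := Fin 1
  pairing := (Equiv.refl (Fin 1)).prodCongr (bubblePerm c)
  invol := by
    rintro ⟨i, k⟩
    have hk : ∀ j : Fin 4, bubblePerm c (bubblePerm c j) = j := by
      fin_cases c <;> decide
    simp [Equiv.prodCongr_apply, hk]
  fixfree := by
    rintro ⟨i, k⟩ h
    have hk : bubblePerm c k = k := congrArg Prod.snd h
    have hne : ∀ j : Fin 4, bubblePerm c j ≠ j := by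
      fin_cases c <;> decide
    exact hne k hk

namespace TGraph

variable (H K : TGraph)

/-- The image of a vertex of `H` in the glued graph. -/
def inlV (x : H.V) : (H.B ⊕ K.B) × Fin 4 := (Sum.inl x.1, x.2)

/-- The image of a vertex of `K` in the glued graph. -/
def inrV (y : K.V) : (H.B ⊕ K.B) × Fin 4 := (Sum.inr y.1, y.2)

/-- The underlying function of the pairing of the graph obtained by gluing `H`
and `K` along the color-0 edges `{p, H.pairing p}` and `{q, K.pairing q}`:
these two edges are cut and the half-edges are reglued as `p — q` and
`H.pairing p — K.pairing q`.  The new pair of edges is a 2-edge-cut of the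
resulting graph when `H` and `K` are connected. -/
def glueFun (p : H.V) (q : K.V) : (H.B ⊕ K.B) × Fin 4 → (H.B ⊕ K.B) × Fin 4 :=
  fun z =>
    match z with
    | (Sum.inl u, k) =>
        if (u, k) = p then inrV H K q
        else if (u, k) = H.pairing p then inrV H K (K.pairing q)
        else inlV H K (H.pairing (u, k))
    | (Sum.inr u, k) =>
        if (u, k) = q then inlV H K p
        else if (u, k) = K.pairing q then inlV H K (H.pairing p)
        else inrV H K (K.pairing (u, k))

theorem glueFun_inlV (p : H.V) (q : K.V) (x : H.V) :
    glueFun H K p q (inlV H K x) =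
      if x = p then inrV H K q
      else if x = H.pairing p then inrV H K (K.pairing q)
      else inlV H K (H.pairing x) := by
  cases x
  rfl

theorem glueFun_inrV (p : H.V) (q : K.V) (y : K.V) :
    glueFun H K p q (inrV H K y) =
      if y = q then inlV H K p
      else if y = K.pairing q then inlV H K (H.pairing p)
      else inrV H K (K.pairing y) := by
  cases y
  rfl

theorem inlV_injective : Function.Injective (inlV H K) := by
  rintro ⟨u, k⟩ ⟨u', k'⟩ h
  have h1 : (Sum.inl u : H.B ⊕ K.B) = Sum.inl u' := congrArg Prod.fst h
  have h2 : k = k' := congrArg Prod.snd h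
  exact Prod.ext (Sum.inl_injective h1) h2

theorem inrV_injective : Function.Injective (inrV H K) := by
  rintro ⟨u, k⟩ ⟨u', k'⟩ h
  have h1 : (Sum.inr u : H.B ⊕ K.B) = Sum.inr u' := congrArg Prod.fst h
  have h2 : k = k' := congrArg Prod.snd h
  exact Prod.ext (Sum.inr_injective h1) h2

theorem inlV_ne_inrV (x : H.V) (y : K.V) : inlV H K x ≠ inrV H K y := by
  intro h
  exact Sum.inl_ne_inr (congrArg Prod.fst h)

theorem glueFun_invol_inl (p : H.V) (q : K.V) (x : H.V) :
    glueFun H K p q (glueFun H K p q (inlV H K x)) = inlV H K x := by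
  rw [glueFun_inlV]
  by_cases h1 : x = p
  · rw [if_pos h1, glueFun_inrV, if_pos rfl, h1]
  · by_cases h2 : x = H.pairing p
    · rw [if_neg h1, if_pos h2, glueFun_inrV,
        if_neg (fun h => K.fixfree q h), if_pos rfl, h2]
    · have hne1 : H.pairing x ≠ p := by
        intro h; apply h2
        have := congrArg H.pairing h
        rw [H.invol] at this; exact this
      have hne2 : H.pairing x ≠ H.pairing p := fun h => h1 (H.pairing.injective h)
      rw [if_neg h1, if_neg h2, glueFun_inlV, if_neg hne1, if_neg hne2, H.invol]

theorem glueFun_invol_inr (p : H.V) (q : K.V) (y : K.V) :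
    glueFun H K p q (glueFun H K p q (inrV H K y)) = inrV H K y := by
  rw [glueFun_inrV]
  by_cases h1 : y = q
  · rw [if_pos h1, glueFun_inlV, if_pos rfl, h1]
  · by_cases h2 : y = K.pairing q
    · rw [if_neg h1, if_pos h2, glueFun_inlV,
        if_neg (fun h => H.fixfree p h), if_pos rfl, h2]
    · have hne1 : K.pairing y ≠ q := by
        intro h; apply h2
        have := congrArg K.pairing h
        rw [K.invol] at this; exact this
      have hne2 : K.pairing y ≠ K.pairing q := fun h => h1 (K.pairing.injective h)
      rw [if_neg h1, if_neg h2, glueFun_inrV, if_neg hne1, if_neg hne2, K.invol]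

theorem glueFun_involutive (p : H.V) (q : K.V) :
    Function.Involutive (glueFun H K p q) := by
  rintro ⟨(u | u), k⟩
  · exact glueFun_invol_inl H K p q (u, k)
  · exact glueFun_invol_inr H K p q (u, k)

theorem glueFun_fixfree (p : H.V) (q : K.V) :
    ∀ z, glueFun H K p q z ≠ z := by
  have hl : ∀ x : H.V, glueFun H K p q (inlV H K x) ≠ inlV H K x := by
    intro x h
    rw [glueFun_inlV] at h
    by_cases h1 : x = p
    · rw [if_pos h1] at h
      exact inlV_ne_inrV H K x q h.symm
    · by_cases h2 : x = H.pairing p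
      · rw [if_neg h1, if_pos h2] at h
        exact inlV_ne_inrV H K x (K.pairing q) h.symm
      · rw [if_neg h1, if_neg h2] at h
        exact H.fixfree x (inlV_injective H K h)
  have hr : ∀ y : K.V, glueFun H K p q (inrV H K y) ≠ inrV H K y := by
    intro y h
    rw [glueFun_inrV] at h
    by_cases h1 : y = q
    · rw [if_pos h1] at h
      exact inlV_ne_inrV H K p y h
    · by_cases h2 : y = K.pairing q
      · rw [if_neg h1, if_pos h2] at h
        exact inlV_ne_inrV H K (H.pairing p) y h
      · rw [if_neg h1, if_neg h2] at h
        exact K.fixfree y (inrV_injective H K h)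
  rintro ⟨(u | u), k⟩
  · exact hl (u, k)
  · exact hr (u, k)

/-- Gluing two graphs along a pair of color-0 edges.  When `H` and `K` are
connected, the two new color-0 edges form a 2-edge-cut of the glued graph, and
conversely every connected graph with a color-0 2-edge-cut arises this way
from the two closed graphs obtained by cutting the two edges and closing each
side. -/
def glue (p : H.V) (q : K.V) : TGraph where
  B := H.B ⊕ K.B
  pairing := (glueFun_involutive H K p q).toPerm
  invol := fun v => glueFun_involutive H K p q v
  fixfree := fun v => glueFun_fixfree H K p q v

/-- Insertion of a melonic dipole (the 2-point graph obtained by cutting one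
color-0 edge of `G_2`) on the color-0 edge `{v, G.pairing v}` of `G`. -/
def insertDipole (G : TGraph) (v : G.V) : TGraph :=
  glue G G2 v ((0 : Fin 2), (0 : Fin 4))

end TGraph

open TGraph

/-- Melonic graphs (up to isomorphism): `G_2` is melonic, and inserting a
melonic dipole on any color-0 edge of a melonic graph yields a melonic
graph. -/
inductive IsMelonic : TGraph → Prop
  | base {G : TGraph} (h : IsIso G G2) : IsMelonic G
  | insert {G : TGraph} (hG : IsMelonic G) (v : G.V) {H : TGraph}
      (h : IsIso H (G.insertDipole v)) : IsMelonic H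

/-- Double tadpoles decorated with melonic 2-point functions (up to
isomorphism): these are exactly the graphs obtained from one of the double
tadpoles `G_1^{(c)}` by repeatedly inserting melonic dipoles on color-0 edges,
i.e. double tadpoles whose two color-0 edges are replaced by melonic 2-point
functions. -/
inductive IsDecoratedTadpole : TGraph → Prop
  | base {G : TGraph} (c : Fin 3) (h : IsIso G (G1 c)) : IsDecoratedTadpole G
  | insert {G : TGraph} (hG : IsDecoratedTadpole G) (v : G.V) {H : TGraph}
      (h : IsIso H (G.insertDipole v)) : IsDecoratedTadpole H


/-! Inserting a melonic dipole on a color-0 edge `{v, v'}` adds two bubbles and exactly one face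
of each color `c`: the face through `{v, v'}` is rerouted through the dipole vertices `0` and
`bubblePerm c 0` of both new bubbles, while the other four dipole vertices close up into a new
face of length 2. The double tadpole `G_1^{(c)}` has one bubble and four faces (two of color `c`,
one of each other color), so after `n` insertions there are `2n + 1` bubbles and `3n + 4` faces.
Faces are counted as the fibres of a map to an explicit type that is constant along the edges of
colors `0` and `c` and has a section meeting every face. -/

section OrbitsOfClosure

open MulAction

variable {V T : Type*} {S : Set (Equiv.Perm V)}

theorem mem_orbit_closure_induction (r : V → V → Prop) (hr : Equivalence r)
    (hS : ∀ s ∈ S, ∀ v, r (s v) v) {u v : V} (h : u ∈ orbit (Subgroup.closure S) v) :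
    r u v := by
  suffices key : ∀ g ∈ Subgroup.closure S, ∀ v, r (g v) v by
    obtain ⟨⟨g, hg⟩, rfl⟩ := h
    exact key g hg v
  intro g hg
  induction hg using Subgroup.closure_induction with
  | mem s hs => exact hS s hs
  | one => exact hr.refl
  | mul a b _ _ ha hb => exact fun v => hr.trans (ha (b v)) (hb v)
  | inv a _ ha => exact fun v => by simpa using hr.symm (ha (a⁻¹ v))

theorem card_orbitRel_quotient_closure (f : V → T) (s : T → V)
    (hf : ∀ g ∈ S, ∀ v, f (g v) = f v) (hfs : Function.LeftInverse f s)
    (hs : ∀ v, v ∈ orbit (Subgroup.closure S) (s (f v))) :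
    Nat.card (orbitRel.Quotient (Subgroup.closure S) V) = Nat.card T := by
  have hf_orbit {u v : V} (h : u ∈ orbit (Subgroup.closure S) v) : f u = f v :=
    mem_orbit_closure_induction (fun u v => f u = f v) (Equivalence.comap eq_equivalence f) hf h
  refine Nat.card_congr
    { toFun := Quotient.lift f fun u v h => hf_orbit (orbitRel_apply.mp h)
      invFun := fun t => Quotient.mk'' (s t)
      left_inv := fun q => ?_
      right_inv := hfs }
  induction q using Quotient.inductionOn with
  | h v => exact Quotient.sound (orbitRel_apply.mpr (mem_orbit_symm.mp (hs v)))

end OrbitsOfClosure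

theorem bubblePerm_bubblePerm (c : Fin 3) (k : Fin 4) : bubblePerm c (bubblePerm c k) = k := by
  revert c k; decide

theorem bubblePerm_zero_ne_zero (c : Fin 3) : bubblePerm c 0 ≠ 0 := by
  revert c; decide

theorem bubblePerm_eq_zero_or_eq_iff (c : Fin 3) (k : Fin 4) :
    (bubblePerm c k = 0 ∨ bubblePerm c k = bubblePerm c 0) ↔ (k = 0 ∨ k = bubblePerm c 0) := by
  revert c k; decide

theorem eq_or_eq_bubblePerm_of_ne {c : Fin 3} {k k' : Fin 4}
    (hk : ¬(k = 0 ∨ k = bubblePerm c 0)) (hk' : ¬(k' = 0 ∨ k' = bubblePerm c 0)) : k' = k ∨ k' = bubblePerm c k := by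
  revert c k k'; decide

theorem bubblePerm_succ_zero_ne (c : Fin 3) :
    ¬(bubblePerm (c + 1) 0 = 0 ∨ bubblePerm (c + 1) 0 = bubblePerm c 0) := by
  revert c; decide

namespace TGraph

variable {G H : TGraph} {c : Fin 3}

theorem sameFace_equivalence : Equivalence (G.sameFace c) :=
  (MulAction.orbitRel (G.faceGroup c) G.V).iseqv

theorem sameFace_refl (v : G.V) : G.sameFace c v v :=
  sameFace_equivalence.refl v

protected theorem sameFace.symm {u v : G.V} (h : G.sameFace c u v) : G.sameFace c v u :=
  sameFace_equivalence.symm h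

protected theorem sameFace.trans {u v w : G.V} (h₁ : G.sameFace c u v)
    (h₂ : G.sameFace c v w) : G.sameFace c u w :=
  sameFace_equivalence.trans h₁ h₂

theorem sameFace_pairing (v : G.V) : G.sameFace c (G.pairing v) v :=
  ⟨⟨G.pairing, Subgroup.subset_closure (Set.mem_insert _ _)⟩, rfl⟩

theorem sameFace_colPerm (v : G.V) : G.sameFace c (G.colPerm c v) v :=
  ⟨⟨G.colPerm c, Subgroup.subset_closure (Set.mem_insert_of_mem _ rfl)⟩, rfl⟩

theorem sameFace_map (φ : G.V → H.V) (hp : ∀ v, H.sameFace c (φ (G.pairing v)) (φ v))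
    (hc : ∀ v, H.sameFace c (φ (G.colPerm c v)) (φ v)) {u v : G.V} (h : G.sameFace c u v) :
    H.sameFace c (φ u) (φ v) :=
  mem_orbit_closure_induction (fun u v => H.sameFace c (φ u) (φ v))
    (sameFace_equivalence.comap φ) (by rintro s (rfl | rfl); exacts [hp, hc]) h

abbrev Faces (G : TGraph) (c : Fin 3) : Type := MulAction.orbitRel.Quotient (G.faceGroup c) G.V

def face (G : TGraph) (c : Fin 3) (v : G.V) : G.Faces c := Quotient.mk'' v

theorem face_eq_face_iff {u v : G.V} : G.face c u = G.face c v ↔ G.sameFace c u v :=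
  Quotient.eq''.trans MulAction.orbitRel_apply

theorem sameFace_out_face (v : G.V) : G.sameFace c (G.face c v).out v :=
  face_eq_face_iff.mp (Quotient.out_eq' _)

theorem numFaces_eq_card {T : Type*} (f : G.V → T) (s : T → G.V)
    (hp : ∀ v, f (G.pairing v) = f v) (hc : ∀ v, f (G.colPerm c v) = f v)
    (hfs : Function.LeftInverse f s) (hs : ∀ v, G.sameFace c v (s (f v))) :
    G.numFaces c = Nat.card T :=
  card_orbitRel_quotient_closure f s (by rintro g (rfl | rfl); exacts [hp, hc]) hfs hs

theorem numFaces_eq_of_surjective {n : ℕ} (f : G.V → Fin n)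
    (hp : ∀ v, f (G.pairing v) = f v) (hc : ∀ v, f (G.colPerm c v) = f v)
    (hf : Function.Surjective f)
    (hfib : ∀ u v, f u = f v →
      u = v ∨ u = G.pairing v ∨ u = G.colPerm c v ∨ u = G.colPerm c (G.pairing v)) :
    G.numFaces c = n := by
  rw [numFaces_eq_card f (Function.surjInv hf) hp hc (Function.rightInverse_surjInv hf),
    Nat.card_eq_fintype_card, Fintype.card_fin]
  intro v
  have hw : f v = f (Function.surjInv hf (f v)) := (Function.surjInv_eq hf (f v)).symm
  generalize Function.surjInv hf (f v) = w at hw ⊢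
  rcases hfib v w hw with rfl | rfl | rfl | rfl
  exacts [sameFace_refl _, sameFace_pairing _, sameFace_colPerm _,
    (sameFace_colPerm _).trans (sameFace_pairing _)]


def Iso.symm (e : Iso G H) : Iso H G where
  toEquiv := e.toEquiv.symm
  map_pairing w := e.toEquiv.injective (by rw [e.map_pairing]; simp)
  map_col c w := e.toEquiv.injective (by rw [e.map_col]; simp)

theorem Iso.sameFace (e : Iso G H) {c : Fin 3} {u v : G.V} (h : G.sameFace c u v) :
    H.sameFace c (e.toEquiv u) (e.toEquiv v) :=
  sameFace_map _ (fun w => by rw [e.map_pairing]; exact sameFace_pairing _)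
    (fun w => by rw [e.map_col]; exact sameFace_colPerm _) h

theorem Iso.sameFace_iff (e : Iso G H) {c : Fin 3} {u v : G.V} :
    H.sameFace c (e.toEquiv u) (e.toEquiv v) ↔ G.sameFace c u v := by
  refine ⟨fun h => ?_, e.sameFace⟩
  simpa [Iso.symm] using e.symm.sameFace h

theorem Iso.numFaces_eq (e : Iso G H) (c : Fin 3) : G.numFaces c = H.numFaces c :=
  Nat.card_congr <| Quotient.congr e.toEquiv fun _ _ => e.sameFace_iff.symm

theorem Iso.F_eq (e : Iso G H) : G.F = H.F :=
  Finset.sum_congr rfl fun c _ => e.numFaces_eq c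

theorem Iso.b_eq (e : Iso G H) : G.b = H.b := by
  have h := Fintype.card_congr e.toEquiv
  simp only [Fintype.card_prod, Fintype.card_fin] at h
  exact Nat.eq_of_mul_eq_mul_right (by norm_num) h

end TGraph

namespace TGraph

section Dipole

variable {G : TGraph} {v : G.V} {c : Fin 3}

variable (G v) in
def outerV (x : G.V) : (G.insertDipole v).V := inlV G G2 x

variable (G v) in
def dipoleV (i : Fin 2) (k : Fin 4) : (G.insertDipole v).V := inrV G G2 (i, k)

theorem insertDipole_pairing_outerV_self :
    (G.insertDipole v).pairing (G.outerV v v) = G.dipoleV v 0 0 :=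
  (glueFun_inlV G G2 v _ v).trans (if_pos rfl)

theorem insertDipole_pairing_outerV_pairing :
    (G.insertDipole v).pairing (G.outerV v (G.pairing v)) = G.dipoleV v 1 0 :=
  (glueFun_inlV G G2 v _ _).trans ((if_neg (G.fixfree v)).trans (if_pos rfl))

theorem insertDipole_pairing_outerV_of_ne {x : G.V} (h₁ : x ≠ v) (h₂ : x ≠ G.pairing v) :
    (G.insertDipole v).pairing (G.outerV v x) = G.outerV v (G.pairing x) :=
  (glueFun_inlV G G2 v _ x).trans ((if_neg h₁).trans (if_neg h₂))

theorem insertDipole_pairing_dipoleV_zero_zero :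
    (G.insertDipole v).pairing (G.dipoleV v 0 0) = G.outerV v v := by
  rw [← insertDipole_pairing_outerV_self, (G.insertDipole v).invol]

theorem insertDipole_pairing_dipoleV_one_zero :
    (G.insertDipole v).pairing (G.dipoleV v 1 0) = G.outerV v (G.pairing v) := by
  rw [← insertDipole_pairing_outerV_pairing, (G.insertDipole v).invol]

theorem insertDipole_pairing_dipoleV_of_ne_zero (i : Fin 2) {k : Fin 4} (hk : k ≠ 0) :
    (G.insertDipole v).pairing (G.dipoleV v i k) = G.dipoleV v (Equiv.swap 0 1 i) k :=
  (glueFun_inrV G G2 v _ (i, k)).trans <|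
    (if_neg fun h => hk (congrArg Prod.snd h)).trans (if_neg fun h => hk (congrArg Prod.snd h))

theorem insertDipole_colPerm_dipoleV (i : Fin 2) (k : Fin 4) :
    (G.insertDipole v).colPerm c (G.dipoleV v i k) = G.dipoleV v i (bubblePerm c k) :=
  rfl

theorem insertDipole_sameFace_dipoleV_of_ne_zero (i i' : Fin 2) {k : Fin 4} (hk : k ≠ 0) :
    (G.insertDipole v).sameFace c (G.dipoleV v i k) (G.dipoleV v i' k) := by
  rcases (by revert i i'; decide : i = i' ∨ i = Equiv.swap 0 1 i') with rfl | rfl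
  · exact sameFace_refl _
  · rw [← insertDipole_pairing_dipoleV_of_ne_zero i' hk]
    exact sameFace_pairing _

theorem insertDipole_sameFace_dipoleV_bubblePerm (i : Fin 2) (k : Fin 4) :
    (G.insertDipole v).sameFace c (G.dipoleV v i (bubblePerm c k)) (G.dipoleV v i k) :=
  sameFace_colPerm _

theorem insertDipole_sameFace_dipoleV_outerV {i : Fin 2} {k : Fin 4}
    (hk : k = 0 ∨ k = bubblePerm c 0) :
    (G.insertDipole v).sameFace c (G.dipoleV v i k) (G.outerV v v) := by
  have h₀ : (G.insertDipole v).sameFace c (G.dipoleV v 0 0) (G.outerV v v) := by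
    rw [← insertDipole_pairing_outerV_self]
    exact sameFace_pairing _
  have h₁ : (G.insertDipole v).sameFace c (G.dipoleV v i (bubblePerm c 0)) (G.outerV v v) :=
    (insertDipole_sameFace_dipoleV_of_ne_zero i 0 (bubblePerm_zero_ne_zero c)).trans
      ((insertDipole_sameFace_dipoleV_bubblePerm 0 0).trans h₀)
  rcases hk with rfl | rfl
  · simpa only [bubblePerm_bubblePerm] using
      (insertDipole_sameFace_dipoleV_bubblePerm i (bubblePerm c 0)).trans h₁
  · exact h₁

theorem insertDipole_sameFace_outerV_pairing_self :
    (G.insertDipole v).sameFace c (G.outerV v (G.pairing v)) (G.outerV v v) := by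
  have h := (sameFace_pairing (c := c) (G.outerV v (G.pairing v))).symm
  rw [insertDipole_pairing_outerV_pairing] at h
  exact h.trans (insertDipole_sameFace_dipoleV_outerV (Or.inl rfl))

theorem insertDipole_sameFace_outerV {x y : G.V} (h : G.sameFace c x y) :
    (G.insertDipole v).sameFace c (G.outerV v x) (G.outerV v y) := by
  refine sameFace_map (G.outerV v) (fun w => ?_) (fun w => sameFace_colPerm _) h
  by_cases h₁ : w = v
  · subst h₁
    exact insertDipole_sameFace_outerV_pairing_self
  by_cases h₂ : w = G.pairing v
  · subst h₂
    rw [G.invol]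
    exact insertDipole_sameFace_outerV_pairing_self.symm
  rw [← insertDipole_pairing_outerV_of_ne h₁ h₂]
  exact sameFace_pairing _

theorem insertDipole_sameFace_dipoleV_dipoleV {i i' : Fin 2} {k k' : Fin 4}
    (hk : ¬(k = 0 ∨ k = bubblePerm c 0)) (hk' : ¬(k' = 0 ∨ k' = bubblePerm c 0)) :
    (G.insertDipole v).sameFace c (G.dipoleV v i k) (G.dipoleV v i' k') := by
  refine (insertDipole_sameFace_dipoleV_of_ne_zero i i' fun h => hk (Or.inl h)).trans ?_
  rcases eq_or_eq_bubblePerm_of_ne hk hk' with rfl | rfl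
  · exact sameFace_refl _
  · exact (insertDipole_sameFace_dipoleV_bubblePerm i' k).symm

theorem insertDipole_forall {P : (G.insertDipole v).V → Prop} :
    (∀ z, P z) ↔ (∀ x, P (G.outerV v x)) ∧ ∀ i k, P (G.dipoleV v i k) :=
  ⟨fun h => ⟨fun _ => h _, fun _ _ => h _⟩, fun h => fun ⟨u, k⟩ => u.casesOn
    (fun u => h.1 (u, k)) (fun i => h.2 i k)⟩

variable (G v c) in
def dipoleFace : (G.insertDipole v).V → G.Faces c ⊕ Unit
  | (Sum.inl u, k) => .inl (G.face c (u, k))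
  | (Sum.inr _, k) => if k = 0 ∨ k = bubblePerm c 0 then .inl (G.face c v) else .inr ()

theorem dipoleFace_outerV (x : G.V) : dipoleFace G v c (G.outerV v x) = .inl (G.face c x) :=
  rfl

theorem dipoleFace_dipoleV (i : Fin 2) (k : Fin 4) :
    dipoleFace G v c (G.dipoleV v i k) =
      if k = 0 ∨ k = bubblePerm c 0 then .inl (G.face c v) else .inr () :=
  rfl

theorem dipoleFace_pairing (z : (G.insertDipole v).V) :
    dipoleFace G v c ((G.insertDipole v).pairing z) = dipoleFace G v c z := by
  have hv : G.face c (G.pairing v) = G.face c v := face_eq_face_iff.mpr (sameFace_pairing v)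
  revert z
  refine insertDipole_forall.mpr ⟨fun x => ?_, fun i k => ?_⟩
  · by_cases h₁ : x = v
    · rw [h₁, insertDipole_pairing_outerV_self, dipoleFace_dipoleV, if_pos (Or.inl rfl),
        dipoleFace_outerV]
    by_cases h₂ : x = G.pairing v
    · rw [h₂, insertDipole_pairing_outerV_pairing, dipoleFace_dipoleV, if_pos (Or.inl rfl),
        dipoleFace_outerV, hv]
    rw [insertDipole_pairing_outerV_of_ne h₁ h₂, dipoleFace_outerV, dipoleFace_outerV,
      face_eq_face_iff.mpr (sameFace_pairing _)]
  · by_cases hk : k = 0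
    · subst hk
      obtain rfl | rfl : i = 0 ∨ i = 1 := by revert i; decide
      · rw [insertDipole_pairing_dipoleV_zero_zero, dipoleFace_outerV, dipoleFace_dipoleV,
          if_pos (Or.inl rfl)]
      · rw [insertDipole_pairing_dipoleV_one_zero, dipoleFace_outerV, dipoleFace_dipoleV,
          if_pos (Or.inl rfl), hv]
    rw [insertDipole_pairing_dipoleV_of_ne_zero i hk, dipoleFace_dipoleV, dipoleFace_dipoleV]

theorem dipoleFace_colPerm (z : (G.insertDipole v).V) :
    dipoleFace G v c ((G.insertDipole v).colPerm c z) = dipoleFace G v c z := by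
  revert z
  refine insertDipole_forall.mpr ⟨fun x => ?_, fun i k => ?_⟩
  · exact congrArg Sum.inl (face_eq_face_iff.mpr (sameFace_colPerm x))
  · simp only [insertDipole_colPerm_dipoleV, dipoleFace_dipoleV, bubblePerm_eq_zero_or_eq_iff]

theorem insertDipole_numFaces : (G.insertDipole v).numFaces c = G.numFaces c + 1 := by
  let rep : G.Faces c ⊕ Unit → (G.insertDipole v).V :=
    Sum.elim (fun q => G.outerV v q.out) fun _ => G.dipoleV v 0 (bubblePerm (c + 1) 0)
  have hrep : Function.LeftInverse (dipoleFace G v c) rep := by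
    rintro (q | ⟨⟩)
    · exact congrArg Sum.inl (Quotient.out_eq' q)
    · exact (dipoleFace_dipoleV _ _).trans (if_neg (bubblePerm_succ_zero_ne c))
  have hface : ∀ z, (G.insertDipole v).sameFace c z (rep (dipoleFace G v c z)) := by
    refine insertDipole_forall.mpr ⟨fun x => ?_, fun i k => ?_⟩
    · exact insertDipole_sameFace_outerV (sameFace_out_face x).symm
    rw [dipoleFace_dipoleV]
    split_ifs with hk
    · exact (insertDipole_sameFace_dipoleV_outerV hk).trans
        (insertDipole_sameFace_outerV (sameFace_out_face v).symm)
    · exact insertDipole_sameFace_dipoleV_dipoleV hk (bubblePerm_succ_zero_ne c)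
  rw [numFaces_eq_card _ rep dipoleFace_pairing dipoleFace_colPerm hrep hface, Nat.card_sum,
    Nat.card_unique (α := Unit)]
  rfl

theorem insertDipole_b : (G.insertDipole v).b = G.b + 2 :=
  Fintype.card_sum

theorem insertDipole_F : (G.insertDipole v).F = G.F + 3 := by
  simp only [F, Fin.sum_univ_three, insertDipole_numFaces]
  ring

end Dipole

end TGraph

theorem G1_b (c : Fin 3) : (G1 c).b = 1 := rfl

theorem G1_numFaces_self (c : Fin 3) : (G1 c).numFaces c = 2 :=
  numFaces_eq_of_surjective (fun x => if x.2 = 0 ∨ x.2 = bubblePerm c 0 then 0 else 1)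
    (by revert c; decide) (by revert c; decide) (by revert c; decide) (by revert c; decide)

theorem G1_numFaces_of_ne {c c' : Fin 3} (h : c' ≠ c) : (G1 c).numFaces c' = 1 :=
  numFaces_eq_of_surjective (fun _ => 0) (fun _ => rfl) (fun _ => rfl)
    (fun _ => ⟨((0 : Fin 1), (0 : Fin 4)), Subsingleton.elim _ _⟩)
    (by revert c c'; decide)

theorem G1_F (c : Fin 3) : (G1 c).F = 4 := by
  fin_cases c <;> simp [F, Fin.sum_univ_three, G1_numFaces_self, G1_numFaces_of_ne]

theorem IsDecoratedTadpole.exists_b_eq_F_eq {G : TGraph} (h : IsDecoratedTadpole G) :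
    ∃ n : ℕ, G.b = 2 * n + 1 ∧ G.F = 3 * n + 4 := by
  induction h with
  | base c hiso =>
    obtain ⟨e⟩ := hiso
    exact ⟨0, by rw [e.b_eq, G1_b], by rw [e.F_eq, G1_F]⟩
  | insert _ v hiso ih =>
    obtain ⟨e⟩ := hiso
    obtain ⟨n, hb, hF⟩ := ih
    refine ⟨n + 1, ?_, ?_⟩
    · rw [e.b_eq, insertDipole_b, hb]; ring
    · rw [e.F_eq, insertDipole_F, hF]; ring

/-- The number of faces of a double tadpole decorated with
melonic 2-point functions, with `b` bubbles in total, equals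
`(3/2) (b - 1) + 4`; in particular `b` is odd. -/
theorem decorated_tadpole_face_count (G : TGraph) (h : IsDecoratedTadpole G) :
    Odd G.b ∧ (G.F : ℚ) = 3 / 2 * ((G.b : ℚ) - 1) + 4 := by
  obtain ⟨n, hb, hF⟩ := h.exists_b_eq_F_eq
  refine ⟨⟨n, hb⟩, ?_⟩
  rw [hb, hF]
  push_cast
  ring
end

section
/- Let {e_L, e_R} be two color-0 edges of G not forming a 2-edge-cut. If there exist two distinct colors c_1, c_2 with F_{c_1}^{{e_L,e_R}}(G) = F_{c_2}^{{e_L,e_R}}(G) = 1, then there exists a flip of {e_L,e_R} with total face variation ΔF = Σ_c (F_c(G') − F_c(G)) ≥ 0, and ΔF = 0 is possible only if F_{c_3}^{{e_L,e_R}}(G) = 2 for the remaining color c_3. -/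
/-!  A combinatorial model of the Feynman graphs of the rank-3 tetrahedral
(`O(N)^3`) tensor model.

A graph consists of a finite set `B` of bubbles (copies of the tetrahedron
`K_4`); each bubble has four vertices, so the vertex set is `B × Fin 4`.
Inside every bubble the edges of colors `1,2,3` are given once and for all by
the three fixed-point-free involutions of `Fin 4` (the proper 3-edge-coloring
of `K_4`).  The color-0 propagator edges, one per vertex, are encoded by a
fixed-point-free involution `pairing` of the vertex set. -/

open Equiv

open TGraph

open TGraph

/-! A face of colour `c` is an orbit of the group generated by the colour-0 pairing `p` and the
colour-`c` matching `m`; it is the union of exactly two cycles of `m * p` (its two orientations),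
so `m * p` has `2 F_c` cycles. Flipping the colour-0 edges at `u` and `w` multiplies `m * p` on the
left by two transpositions, and each transposition either merges two cycles or splits one. When `u`
and `w` lie on one face of colour `c`, one flip splits twice (`F_c` gains one) and the other merges
and splits (`F_c` unchanged); when they lie on distinct faces, both flips merge twice (`F_c` loses
one). The flip gaining a face of colour `c₁` therefore has `ΔF ≥ 1 + 0 - 1`, with equality only if
colour `c₃` loses a face. -/

theorem Nat.card_eq_two_mul_of_fiber_eq_pair {β γ : Type*} [Finite β] (g : β → γ)
    (hg : Function.Surjective g) (ι : β → β) (hι : ∀ b, ι b ≠ b)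
    (hfiber : ∀ b b', g b' = g b ↔ b' = b ∨ b' = ι b) : Nat.card β = 2 * Nat.card γ := by
  classical
  have := Fintype.ofFinite β
  have := Finite.of_surjective g hg
  have := Fintype.ofFinite γ
  rw [Nat.card_eq_fintype_card, Nat.card_eq_fintype_card, Fintype.card,
    Finset.card_eq_sum_card_fiberwise (f := g) (t := Finset.univ) (fun _ _ => Finset.mem_univ _),
    Finset.sum_const_nat (m := 2), mul_comm, Finset.card_univ]
  intro c _
  obtain ⟨b, rfl⟩ := hg c
  rw [← Finset.card_pair (hι b).symm]
  congr 1
  ext b'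
  simp [hfiber]

namespace Equiv.Perm

variable {α : Type*}

/-- Unlike `cycleType`, this counts fixed points as cycles of length one. -/
noncomputable def numCycles (σ : Perm α) : ℕ := Nat.card (Quotient (SameCycle.setoid σ))

section Swap

variable [DecidableEq α] {σ : Perm α} {a b x y : α}

theorem swap_mul_pow_apply_of_not_sameCycle (ha : ¬σ.SameCycle x a) (hb : ¬σ.SameCycle x b)
    (n : ℕ) : ((swap a b * σ) ^ n) x = (σ ^ n) x := by
  induction n with
  | zero => rfl
  | succ n ih =>
    have hx : σ.SameCycle x (σ ((σ ^ n) x)) := sameCycle_apply_right.2 (sameCycle_pow_right.2 .rfl)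
    rw [pow_succ', mul_apply, ih, mul_apply, pow_succ', mul_apply]
    exact swap_apply_of_ne_of_ne (fun h => ha (h ▸ hx)) (fun h => hb (h ▸ hx))

variable [Finite α]

theorem sameCycle_swap_mul_iff (ha : ¬σ.SameCycle x a) (hb : ¬σ.SameCycle x b) :
    (swap a b * σ).SameCycle x y ↔ σ.SameCycle x y := by
  constructor <;> intro h <;> obtain ⟨n, rfl⟩ := h.exists_nat_pow_eq
  · rw [swap_mul_pow_apply_of_not_sameCycle ha hb]
    exact sameCycle_pow_right.2 .rfl
  · rw [← swap_mul_pow_apply_of_not_sameCycle ha hb]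
    exact sameCycle_pow_right.2 .rfl

theorem sameCycle_swap_mul_of_sameCycle_left (hab : ¬σ.SameCycle a b) (hx : σ.SameCycle a x) :
    (swap a b * σ).SameCycle a x := by
  obtain ⟨n, rfl⟩ := hx.exists_nat_pow_eq
  induction n with
  | zero => exact .rfl
  | succ n ih =>
    set y := (σ ^ n) a
    have hy : σ.SameCycle a (σ y) := sameCycle_apply_right.2 (sameCycle_pow_right.2 .rfl)
    rw [pow_succ', mul_apply]
    by_cases hya : σ y = a
    · rw [hya]
    · have hτ : (swap a b * σ) y = σ y :=
        swap_apply_of_ne_of_ne hya fun h => hab (h ▸ hy)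
      exact (ih (sameCycle_pow_right.2 .rfl)).trans (hτ ▸ sameCycle_apply_right.2 .rfl)

theorem sameCycle_swap_mul_of_not_sameCycle (hab : ¬σ.SameCycle a b) :
    (swap a b * σ).SameCycle a b := by
  have h : (swap a b * σ) (σ⁻¹ a) = b := by simp
  exact (sameCycle_swap_mul_of_sameCycle_left hab ⟨-1, by simp⟩).trans
    (h ▸ sameCycle_apply_right.2 .rfl)

theorem SameCycle.swap_mul (hab : ¬σ.SameCycle a b) (h : σ.SameCycle x y) :
    (swap a b * σ).SameCycle x y := by
  by_cases hxa : σ.SameCycle x a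
  · exact (sameCycle_swap_mul_of_sameCycle_left hab hxa.symm).symm.trans
      (sameCycle_swap_mul_of_sameCycle_left hab (hxa.symm.trans h))
  by_cases hxb : σ.SameCycle x b
  · have hba : ¬σ.SameCycle b a := mt SameCycle.symm hab
    rw [swap_comm]
    exact (sameCycle_swap_mul_of_sameCycle_left hba hxb.symm).symm.trans
      (sameCycle_swap_mul_of_sameCycle_left hba (hxb.symm.trans h))
  exact (sameCycle_swap_mul_iff hxa hxb).2 h

theorem not_sameCycle_swap_mul_of_sameCycle (hne : a ≠ b) (hab : σ.SameCycle a b) :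
    ¬(swap a b * σ).SameCycle a b := by
  classical
  have hex : ∃ k, 0 < k ∧ (σ ^ k) a = b := by
    obtain ⟨k, hk, -, hkb⟩ := hab.exists_pow_eq''
    exact ⟨k, hk, hkb⟩
  obtain ⟨hk, hkb⟩ := Nat.find_spec hex
  set k := Nat.find hex
  have hb : ∀ j, 0 < j → j < k → (σ ^ j) a ≠ b := fun j hj hjk h => Nat.find_min hex hjk ⟨hj, h⟩
  have ha : ∀ j, 0 < j → j < k → (σ ^ j) a ≠ a := by
    intro j hj hjk h
    refine hb (k - j) (by omega) (by omega) ?_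
    calc (σ ^ (k - j)) a = (σ ^ (k - j)) ((σ ^ j) a) := by rw [h]
      _ = b := by rw [← mul_apply, ← pow_add, Nat.sub_add_cancel hjk.le, hkb]
  -- the `swap a b * σ`-orbit of `a` is `a, σ a, …, σ^(k-1) a`, which misses `b`
  have orbit : ∀ n, ∃ j < k, ((swap a b * σ) ^ n) a = (σ ^ j) a := by
    intro n
    induction n with
    | zero => exact ⟨0, hk, rfl⟩
    | succ n ih =>
      obtain ⟨j, hjk, hj⟩ := ih
      rw [pow_succ', mul_apply, hj, mul_apply, ← mul_apply σ, ← pow_succ']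
      rcases (show j + 1 ≤ k from hjk).eq_or_lt with hjk' | hjk'
      · exact ⟨0, hk, by rw [hjk', hkb, swap_apply_right, pow_zero, one_apply]⟩
      · exact ⟨j + 1, hjk', swap_apply_of_ne_of_ne (ha _ j.succ_pos hjk') (hb _ j.succ_pos hjk')⟩
  rintro h
  obtain ⟨n, hn⟩ := h.exists_nat_pow_eq
  obtain ⟨j, hjk, hj⟩ := orbit n
  rcases j.eq_zero_or_pos with rfl | hj0
  · exact hne (by simpa [hn] using hj.symm)
  · exact hb j hj0 hjk (hj ▸ hn)

theorem numCycles_swap_mul_add_one (hab : ¬σ.SameCycle a b) :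
    numCycles (swap a b * σ) + 1 = numCycles σ := by
  let mk : α → Quotient (SameCycle.setoid σ) := Quotient.mk _
  let g : Quotient (SameCycle.setoid σ) → Quotient (SameCycle.setoid (swap a b * σ)) :=
    Quotient.map id fun _ _ => SameCycle.swap_mul hab
  have hab' : mk a ≠ mk b := fun h => hab (Quotient.eq.1 h)
  have himage : g '' {mk b}ᶜ = _root_.Set.univ := by
    refine Set.eq_univ_of_forall fun q => Quotient.inductionOn q fun x => ?_
    by_cases hxb : σ.SameCycle x b
    · refine ⟨mk a, hab', Quotient.sound ?_⟩
      exact (sameCycle_swap_mul_of_not_sameCycle hab).trans (hxb.symm.swap_mul hab)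
    · exact ⟨mk x, fun h => hxb (Quotient.eq.1 h), rfl⟩
  have hinj : Set.InjOn g {mk b}ᶜ := by
    refine fun q hq q' hq' hqq' => Quotient.inductionOn₂ q q' (fun x y hx hy hxy => ?_) hq hq' hqq'
    have hxb : ¬σ.SameCycle x b := fun h => hx (Quotient.sound h)
    have hyb : ¬σ.SameCycle y b := fun h => hy (Quotient.sound h)
    replace hxy : (swap a b * σ).SameCycle x y := Quotient.eq.1 hxy
    refine Quotient.sound ?_
    by_cases hxa : σ.SameCycle x a
    · by_cases hya : σ.SameCycle y a
      · exact hxa.trans hya.symm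
      · exact ((sameCycle_swap_mul_iff hya hyb).1 hxy.symm).symm
    · exact (sameCycle_swap_mul_iff hxa hxb).1 hxy
  calc numCycles (swap a b * σ) + 1 = ({mk b}ᶜ : Set _).ncard + ({mk b} : Set _).ncard := by
        rw [← hinj.ncard_image, himage, Set.ncard_univ, Set.ncard_singleton]; rfl
    _ = numCycles σ := by rw [add_comm, Set.ncard_add_ncard_compl]; rfl

theorem numCycles_swap_mul_of_sameCycle (hne : a ≠ b) (hab : σ.SameCycle a b) :
    numCycles (swap a b * σ) = numCycles σ + 1 := by
  have h := numCycles_swap_mul_add_one (not_sameCycle_swap_mul_of_sameCycle hne hab)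
  rw [← mul_assoc, swap_mul_self, one_mul] at h
  omega

theorem numCycles_swap_mul_swap_mul_of_split_split {c d : α} (hne : a ≠ b)
    (hab : σ.SameCycle a b) (hcd_ne : c ≠ d) (hcd : σ.SameCycle c d) (hac : ¬σ.SameCycle a c) :
    numCycles (swap c d * (swap a b * σ)) = numCycles σ + 2 := by
  have hca : ¬σ.SameCycle c a := mt SameCycle.symm hac
  have hcb : ¬σ.SameCycle c b := fun h => hca (h.trans hab.symm)
  rw [numCycles_swap_mul_of_sameCycle hcd_ne ((sameCycle_swap_mul_iff hca hcb).2 hcd),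
    numCycles_swap_mul_of_sameCycle hne hab]

theorem numCycles_swap_mul_swap_mul_of_merge_merge {c d : α} (hab : ¬σ.SameCycle a b)
    (hca : ¬σ.SameCycle c a) (hcb : ¬σ.SameCycle c b) (hcd : ¬σ.SameCycle c d) :
    numCycles (swap c d * (swap a b * σ)) + 2 = numCycles σ := by
  have h₁ := numCycles_swap_mul_add_one hab
  have h₂ := numCycles_swap_mul_add_one (by rwa [sameCycle_swap_mul_iff hca hcb] :
    ¬(swap a b * σ).SameCycle c d)
  omega

theorem numCycles_swap_mul_swap_mul_of_merge_split {c d : α} (hab : ¬σ.SameCycle a b)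
    (had : σ.SameCycle a d) (hbc : σ.SameCycle b c) (hcd : c ≠ d) :
    numCycles (swap c d * (swap a b * σ)) = numCycles σ := by
  have hcd' : (swap a b * σ).SameCycle c d :=
    (hbc.symm.swap_mul hab).trans ((sameCycle_swap_mul_of_not_sameCycle hab).symm.trans
      (had.swap_mul hab))
  have h₁ := numCycles_swap_mul_add_one hab
  have h₂ := numCycles_swap_mul_of_sameCycle hcd hcd'
  omega

end Swap

section Involution

variable {p m : Perm α} {x y : α}

theorem inv_eq_self_of_involutive (hp : Function.Involutive p) : p⁻¹ = p :=
  Function.Involutive.symm_eq_self_of_involutive p hp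

theorem conj_mul_eq_inv (hp : Function.Involutive p) (hm : Function.Involutive m) :
    p * (m * p) * p⁻¹ = (m * p)⁻¹ := by
  rw [mul_inv_rev, inv_eq_self_of_involutive hp, inv_eq_self_of_involutive hm]
  ext x
  simp only [mul_apply, hp _]

theorem apply_zpow_mul_apply (hp : Function.Involutive p) (hm : Function.Involutive m) (j : ℤ)
    (y : α) : p (((m * p) ^ j) y) = ((m * p) ^ (-j)) (p y) := by
  rw [zpow_neg, ← inv_zpow, ← conj_mul_eq_inv hp hm, conj_zpow, mul_apply, mul_apply,
    inv_eq_self_of_involutive hp, hp]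

theorem sameCycle_mul_map_right_iff (hp : Function.Involutive p) (hm : Function.Involutive m) :
    (m * p).SameCycle (p x) (p y) ↔ (m * p).SameCycle x y := by
  rw [← sameCycle_inv, ← conj_mul_eq_inv hp hm, sameCycle_conj, inv_eq_self_of_involutive hp,
    hp, hp]

theorem not_sameCycle_mul_apply (hp : Function.Involutive p) (hm : Function.Involutive m)
    (hpf : ∀ x, p x ≠ x) (hmf : ∀ x, m x ≠ x) (x : α) : ¬(m * p).SameCycle x (p x) := by
  set σ := m * p
  rintro ⟨k, hk⟩
  -- `p` reverses the `σ`-cycle of `x`, so it fixes its midpoint (`k` even) or `m` does (`k` odd)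
  have hrev : ∀ j : ℤ, p ((σ ^ j) x) = (σ ^ (k - j)) x := fun j => by
    rw [apply_zpow_mul_apply hp hm, ← hk, ← mul_apply, ← zpow_add, neg_add_eq_sub]
  obtain ⟨j, rfl | rfl⟩ := k.even_or_odd'
  · exact hpf _ (by rw [hrev]; congr 2; ring)
  · refine hmf ((σ ^ (j + 1)) x) ?_
    calc m ((σ ^ (j + 1)) x) = σ (p ((σ ^ (j + 1)) x)) := by simp only [σ, mul_apply, hp _]
      _ = σ ((σ ^ j) x) := by rw [hrev]; congr 3; ring
      _ = (σ ^ (j + 1)) x := by rw [← mul_apply, ← zpow_one_add, add_comm]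

theorem sameCycle_mul_map_left_iff (hp : Function.Involutive p) (hm : Function.Involutive m) :
    (m * p).SameCycle (m x) (m y) ↔ (m * p).SameCycle x y := by
  have h : ∀ z, m z = (m * p) (p z) := fun z => by rw [mul_apply, hp]
  rw [h x, h y, sameCycle_apply_left, sameCycle_apply_right, sameCycle_mul_map_right_iff hp hm]

theorem mem_orbit_closure_pair_iff (hp : Function.Involutive p) (hm : Function.Involutive m)
    (v x : α) : x ∈ MulAction.orbit (Subgroup.closure {p, m}) v ↔
      (m * p).SameCycle v x ∨ (m * p).SameCycle (p v) x := by
  set σ := m * p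
  have hpH : p ∈ Subgroup.closure {p, m} := Subgroup.subset_closure (by simp)
  have hσH : σ ∈ Subgroup.closure {p, m} :=
    mul_mem (Subgroup.subset_closure (by simp)) hpH
  constructor
  · rintro ⟨⟨g, hg⟩, rfl⟩
    suffices ∀ y, (σ.SameCycle v y ∨ σ.SameCycle (p v) y) →
        σ.SameCycle v (g y) ∨ σ.SameCycle (p v) (g y) from this v (.inl .rfl)
    have hp' : ∀ y, (σ.SameCycle v y ∨ σ.SameCycle (p v) y) →
        σ.SameCycle v (p y) ∨ σ.SameCycle (p v) (p y) := by
      rintro y (h | h)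
      · exact .inr ((sameCycle_mul_map_right_iff hp hm).2 h)
      · exact .inl (hp v ▸ (sameCycle_mul_map_right_iff hp hm).2 h)
    have hm' : ∀ y, (σ.SameCycle v y ∨ σ.SameCycle (p v) y) →
        σ.SameCycle v (m y) ∨ σ.SameCycle (p v) (m y) := by
      intro y hy
      have h : m y = σ (p y) := by rw [mul_apply, hp]
      rw [h, sameCycle_apply_right, sameCycle_apply_right]
      exact hp' y hy
    induction hg using Subgroup.closure_induction'' with
    | mem g hg =>
      rcases hg with rfl | rfl
      · exact hp'
      · exact hm'
    | inv_mem g hg =>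
      rcases hg with rfl | rfl
      · rwa [inv_eq_self_of_involutive hp]
      · rwa [inv_eq_self_of_involutive hm]
    | one => exact fun _ => id
    | mul g g' _ _ ihg ihg' => exact fun y hy => ihg _ (ihg' y hy)
  · rintro (⟨k, rfl⟩ | ⟨k, rfl⟩)
    · exact ⟨⟨σ ^ k, zpow_mem hσH k⟩, rfl⟩
    · exact ⟨⟨σ ^ k * p, mul_mem (zpow_mem hσH k) hpH⟩, rfl⟩

end Involution

theorem numCycles_mul_eq_two_mul [Finite α] {p m : Perm α} (hp : Function.Involutive p)
    (hm : Function.Involutive m) (hpf : ∀ x, p x ≠ x) (hmf : ∀ x, m x ≠ x) :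
    numCycles (m * p) =
      2 * Nat.card (MulAction.orbitRel.Quotient (Subgroup.closure {p, m}) α) := by
  let mk : α → Quotient (SameCycle.setoid (m * p)) := Quotient.mk _
  have hσ : ∀ ⦃x y : α⦄, (m * p).SameCycle x y →
      x ∈ MulAction.orbit (Subgroup.closure {p, m}) y := fun x y h =>
    (mem_orbit_closure_pair_iff hp hm y x).2 (.inl h.symm)
  refine Nat.card_eq_two_mul_of_fiber_eq_pair (Quotient.map id hσ)
    (Quotient.map_surjective hσ Function.surjective_id) (Quotient.map p fun x y =>
      (sameCycle_mul_map_right_iff hp hm).2) ?_ ?_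
  · refine fun q => Quotient.inductionOn q fun x h => ?_
    exact not_sameCycle_mul_apply hp hm hpf hmf x (Quotient.eq.1 h).symm
  · refine fun q q' => Quotient.inductionOn₂ q q' fun x y => ?_
    change Quotient.mk _ y = Quotient.mk _ x ↔ mk y = mk x ∨ mk y = mk (p x)
    rw [Quotient.eq, Quotient.eq, Quotient.eq]
    exact (mem_orbit_closure_pair_iff hp hm x y).trans (or_congr sameCycle_comm sameCycle_comm)

end Equiv.Perm

theorem Fin.sum_univ_three_eq_of_ne {M : Type*} [AddCommMonoid M] (f : Fin 3 → M) {i j k : Fin 3}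
    (hij : i ≠ j) (hki : k ≠ i) (hkj : k ≠ j) : ∑ l, f l = f i + f j + f k := by
  rw [Fin.sum_univ_three]
  fin_cases i <;> fin_cases j <;> fin_cases k <;> simp_all <;> abel

theorem bubblePerm_involutive (c : Fin 3) : Function.Involutive (bubblePerm c) := by
  intro k
  revert c k
  decide

theorem bubblePerm_apply_ne (c : Fin 3) (k : Fin 4) : bubblePerm c k ≠ k := by
  revert c k
  decide

namespace TGraph

open Equiv.Perm

variable (G : TGraph) (c : Fin 3)

theorem colPerm_involutive : Function.Involutive (G.colPerm c) := fun v =>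
  Prod.ext rfl (bubblePerm_involutive c v.2)

theorem colPerm_apply_ne (v : G.V) : G.colPerm c v ≠ v := fun h =>
  bubblePerm_apply_ne c v.2 (congrArg Prod.snd h)

def facePerm : Perm G.V := G.colPerm c * G.pairing

theorem numCycles_facePerm : (G.facePerm c).numCycles = 2 * G.numFaces c :=
  numCycles_mul_eq_two_mul G.invol (G.colPerm_involutive c) G.fixfree (G.colPerm_apply_ne c)

theorem facePerm_flip (u w : G.V) :
    (G.flip u w).facePerm c = swap (G.colPerm c (G.pairing u)) (G.colPerm c w) *
      (swap (G.colPerm c u) (G.colPerm c (G.pairing w)) * G.facePerm c) := by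
  calc G.colPerm c * (swap (G.pairing u) w * G.pairing * swap (G.pairing u) w)
      = G.colPerm c * swap (G.pairing u) w * G.pairing * swap (G.pairing u) w := by
        simp only [mul_assoc]
    _ = swap (G.colPerm c (G.pairing u)) (G.colPerm c w) *
          (G.facePerm c * swap (G.pairing u) w) := by
        rw [mul_swap_eq_swap_mul (G.colPerm c)]
        simp only [facePerm, mul_assoc]
    _ = _ := by
        rw [mul_swap_eq_swap_mul (G.facePerm c)]
        simp [facePerm, G.invol]

theorem numCycles_facePerm_flip (u w : G.V) :
    numCycles (swap (G.colPerm c (G.pairing u)) (G.colPerm c w) *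
      (swap (G.colPerm c u) (G.colPerm c (G.pairing w)) * G.facePerm c)) =
      2 * (G.flip u w).numFaces c := by
  rw [← facePerm_flip]
  exact (G.flip u w).numCycles_facePerm c

def flips (u w : G.V) : Set TGraph := {G.flip u w, G.flip u (G.pairing w)}

theorem F_eq_numFaces_add_numFaces_add_numFaces {c₁ c₂ c₃ : Fin 3} (h₁₂ : c₁ ≠ c₂)
    (h₃₁ : c₃ ≠ c₁) (h₃₂ : c₃ ≠ c₂) : G.F = G.numFaces c₁ + G.numFaces c₂ + G.numFaces c₃ :=
  Fin.sum_univ_three_eq_of_ne _ h₁₂ h₃₁ h₃₂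

variable {G c} {u w x y : G.V}

theorem sameCycle_facePerm_pairing_iff :
    (G.facePerm c).SameCycle (G.pairing x) (G.pairing y) ↔ (G.facePerm c).SameCycle x y :=
  sameCycle_mul_map_right_iff G.invol (G.colPerm_involutive c)

theorem sameCycle_facePerm_colPerm_iff :
    (G.facePerm c).SameCycle (G.colPerm c x) (G.colPerm c y) ↔ (G.facePerm c).SameCycle x y :=
  sameCycle_mul_map_left_iff G.invol (G.colPerm_involutive c)

theorem not_sameCycle_facePerm_pairing (x : G.V) : ¬(G.facePerm c).SameCycle x (G.pairing x) :=
  not_sameCycle_mul_apply G.invol (G.colPerm_involutive c) G.fixfree (G.colPerm_apply_ne c) x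

theorem sameFace_iff : G.sameFace c u w ↔
    (G.facePerm c).SameCycle u w ∨ (G.facePerm c).SameCycle u (G.pairing w) :=
  (mem_orbit_closure_pair_iff G.invol (G.colPerm_involutive c) w u).trans
    (or_congr sameCycle_comm sameCycle_comm)

theorem sameFace_pairing_right : G.sameFace c u (G.pairing w) ↔ G.sameFace c u w := by
  rw [sameFace_iff, sameFace_iff, G.invol, or_comm]

theorem numFaces_flip_of_sameCycle (hw : w ≠ G.pairing u) (h : (G.facePerm c).SameCycle u w) :
    (G.flip u w).numFaces c = G.numFaces c := by
  have hswap := numCycles_swap_mul_swap_mul_of_merge_split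
    (sameCycle_facePerm_colPerm_iff.not.2 fun h' =>
      not_sameCycle_facePerm_pairing w (h.symm.trans h'))
    (sameCycle_facePerm_colPerm_iff.2 h)
    (sameCycle_facePerm_colPerm_iff.2 (sameCycle_facePerm_pairing_iff.2 h.symm))
    ((G.colPerm c).injective.ne hw.symm)
  have := G.numCycles_facePerm_flip c u w
  have := G.numCycles_facePerm c
  omega

theorem numFaces_flip_of_sameCycle_pairing (hw : w ≠ G.pairing u)
    (h : (G.facePerm c).SameCycle u (G.pairing w)) :
    (G.flip u w).numFaces c = G.numFaces c + 1 := by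
  have hpu : (G.facePerm c).SameCycle (G.pairing u) w := by
    simpa only [G.invol] using sameCycle_facePerm_pairing_iff.2 h
  have hswap := numCycles_swap_mul_swap_mul_of_split_split
    ((G.colPerm c).injective.ne fun hu => hw (by rw [hu, G.invol]))
    (sameCycle_facePerm_colPerm_iff.2 h) ((G.colPerm c).injective.ne hw.symm)
    (sameCycle_facePerm_colPerm_iff.2 hpu)
    (sameCycle_facePerm_colPerm_iff.not.2 (not_sameCycle_facePerm_pairing u))
  have := G.numCycles_facePerm_flip c u w
  have := G.numCycles_facePerm c
  omega

theorem numFaces_flip_add_one (h : ¬G.sameFace c u w) :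
    (G.flip u w).numFaces c + 1 = G.numFaces c := by
  rw [sameFace_iff, not_or] at h
  have hpu : ¬(G.facePerm c).SameCycle (G.pairing u) w := by
    simpa only [G.invol] using sameCycle_facePerm_pairing_iff.not.2 h.2
  have hswap := numCycles_swap_mul_swap_mul_of_merge_merge
    (sameCycle_facePerm_colPerm_iff.not.2 h.2)
    (sameCycle_facePerm_colPerm_iff.not.2 fun h' => not_sameCycle_facePerm_pairing u h'.symm)
    (sameCycle_facePerm_colPerm_iff.not.2 (sameCycle_facePerm_pairing_iff.not.2 h.1))
    (sameCycle_facePerm_colPerm_iff.not.2 hpu)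
  have := G.numCycles_facePerm_flip c u w
  have := G.numCycles_facePerm c
  omega

theorem numFaces_le_of_mem_flips (hw₁ : w ≠ u) (hw₂ : w ≠ G.pairing u) (h : G.sameFace c u w)
    {G' : TGraph} (hG' : G' ∈ G.flips u w) : G.numFaces c ≤ G'.numFaces c := by
  suffices ∀ w, w ≠ G.pairing u → G.sameFace c u w → G.numFaces c ≤ (G.flip u w).numFaces c by
    rcases hG' with rfl | rfl
    · exact this w hw₂ h
    · exact this _ (G.pairing.injective.ne hw₁) (sameFace_pairing_right.2 h)
  intro w hw h
  rcases sameFace_iff.1 h with h | h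
  · exact (numFaces_flip_of_sameCycle hw h).ge
  · exact (numFaces_flip_of_sameCycle_pairing hw h).symm ▸ Nat.le_succ _

theorem numFaces_add_one_of_mem_flips (h : ¬G.sameFace c u w) {G' : TGraph}
    (hG' : G' ∈ G.flips u w) : G'.numFaces c + 1 = G.numFaces c := by
  rcases hG' with rfl | rfl
  · exact numFaces_flip_add_one h
  · exact numFaces_flip_add_one (mt sameFace_pairing_right.1 h)

theorem exists_mem_flips_numFaces_eq_add_one (hw₁ : w ≠ u) (hw₂ : w ≠ G.pairing u)
    (h : G.sameFace c u w) : ∃ G' ∈ G.flips u w, G'.numFaces c = G.numFaces c + 1 := by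
  rcases sameFace_iff.1 h with h | h
  · refine ⟨_, .inr rfl, numFaces_flip_of_sameCycle_pairing (G.pairing.injective.ne hw₁) ?_⟩
    rwa [G.invol]
  · exact ⟨_, .inl rfl, numFaces_flip_of_sameCycle_pairing hw₂ h⟩

end TGraph

theorem flip_total_variation_general (G : TGraph) (u w : G.V)
    (hw1 : w ≠ u) (hw2 : w ≠ G.pairing u)
    (c₁ c₂ : Fin 3) (hc : c₁ ≠ c₂)
    (h1 : G.sameFace c₁ u w) (h2 : G.sameFace c₂ u w) :
    ∃ G' ∈ ({G.flip u w, G.flip u (G.pairing w)} : Set TGraph),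
      G.F ≤ G'.F ∧
        (G'.F = G.F → ∀ c₃, c₃ ≠ c₁ → c₃ ≠ c₂ → ¬ G.sameFace c₃ u w) := by
  obtain ⟨G', hG', hc₁⟩ := exists_mem_flips_numFaces_eq_add_one hw1 hw2 h1
  have hc₂ := numFaces_le_of_mem_flips hw1 hw2 h2 hG'
  have hF : ∀ c₃, c₃ ≠ c₁ → c₃ ≠ c₂ → G.F ≤ G'.F ∧ (G.sameFace c₃ u w → G.F < G'.F) := by
    intro c₃ h₃₁ h₃₂
    rw [G.F_eq_numFaces_add_numFaces_add_numFaces hc h₃₁ h₃₂,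
      G'.F_eq_numFaces_add_numFaces_add_numFaces hc h₃₁ h₃₂]
    by_cases h₃ : G.sameFace c₃ u w
    · have hc₃ := numFaces_le_of_mem_flips hw1 hw2 h₃ hG'
      exact ⟨by omega, fun _ => by omega⟩
    · have hc₃ := numFaces_add_one_of_mem_flips h₃ hG'
      exact ⟨by omega, fun h => absurd h h₃⟩
  obtain ⟨c₃, h₃₁, h₃₂⟩ : ∃ c₃ : Fin 3, c₃ ≠ c₁ ∧ c₃ ≠ c₂ := by
    have : ∀ a b : Fin 3, ∃ c, c ≠ a ∧ c ≠ b := by decide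
    exact this c₁ c₂
  exact ⟨G', hG', (hF c₃ h₃₁ h₃₂).1, fun hF' c h₁ h₂ h₃ => ((hF c h₁ h₂).2 h₃).ne' hF'⟩

/-- If the two (distinct) color-0 edges through `u` and `w` do
not form a 2-edge-cut and lie on a single common face for two distinct colors
`c₁, c₂`, then one of the two flips of this pair of edges does not decrease
the total number of faces, and it can leave the total number of faces
unchanged only if the two edges lie on two distinct faces of the remaining
color `c₃`. -/
theorem flip_total_variation (G : TGraph) (u w : G.V)
    (hw1 : w ≠ u) (hw2 : w ≠ G.pairing u)
    (hcut : ¬ G.CutDisconnects u w)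
    (c₁ c₂ : Fin 3) (hc : c₁ ≠ c₂)
    (h1 : G.sameFace c₁ u w) (h2 : G.sameFace c₂ u w) :
    ∃ G' ∈ ({G.flip u w, G.flip u (G.pairing w)} : Set TGraph),
      G.F ≤ G'.F ∧
        (G'.F = G.F → ∀ c₃, c₃ ≠ c₁ → c₃ ≠ c₂ → ¬ G.sameFace c₃ u w) :=
  flip_total_variation_general G u w hw1 hw2 c₁ c₂ hc h1 h2
end
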